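/- For every n ≥ 1 there exist constants C > 0 and δ₀ ∈ (0,1) such that: for every δ ∈ (0, δ₀] and every complex n×n matrix Q with QᵀQ = I, det Q = 1, and ‖Im Q‖ < δ·‖Re Q‖ (operator norms, entrywise real/imaginary parts), there exists U ∈ SO(n,ℝ) with ‖Q − U‖ ≤ C·δ. -/

import Mathlib

open scoped Matrix.Norms.L2Operator Matrix

/-- The entrywise real part of a complex matrix. -/
def matRe {n : ℕ} (B : Matrix (Fin n) (Fin n) ℂ) : Matrix (Fin n) (Fin n) ℝ :=
  B.map Complex.re

/-- The entrywise imaginary part of a complex matrix. -/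
def matIm {n : ℕ} (B : Matrix (Fin n) (Fin n) ℂ) : Matrix (Fin n) (Fin n) ℝ :=
  B.map Complex.im

/-!
Write `Q = X + iY`. The real part of `QᵀQ = 1` reads `XᵀX = 1 + YᵀY`, so `‖X‖` stays bounded and
`X` lies within `‖X‖ ‖Y‖² = O(δ²)` of the orthogonal factor `U = X (XᵀX)^(-1/2)` of its polar
decomposition; hence `‖Q - U‖ = O(δ)`. The sign of `det U` is then forced: if `det U = -1`, the
complex orthogonal matrix `M = QUᵀ` has `det M = -1`, so `-1` is an eigenvalue of `M` and
`‖Q - U‖ = ‖1 - M‖ ≥ 2`.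
-/

lemma abs_one_sub_inv_sqrt_one_add_le {t : ℝ} (ht : 0 ≤ t) : |1 - (√(1 + t))⁻¹| ≤ t := by
  have h1 : 1 ≤ √(1 + t) := Real.one_le_sqrt.mpr (by linarith)
  have h2 : √(1 + t) ≤ 1 + t := (Real.sqrt_le_left (by linarith)).mpr (by nlinarith)
  have h3 : 1 - t ≤ (1 + t)⁻¹ := by
    rw [inv_eq_one_div, le_div_iff₀ (by linarith)]; nlinarith
  rw [abs_of_nonneg (sub_nonneg.mpr (inv_le_one_of_one_le₀ h1))]
  linarith [inv_anti₀ (by linarith) h2]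

lemma EuclideanSpace.norm_sq_eq_re_add_im {n : Type*} [Fintype n]
    (x : EuclideanSpace ℂ n) :
    ‖x‖ ^ 2 = ‖WithLp.toLp 2 fun i => (x i).re‖ ^ 2 + ‖WithLp.toLp 2 fun i => (x i).im‖ ^ 2 := by
  simp only [EuclideanSpace.norm_sq_eq, ← Finset.sum_add_distrib, Complex.sq_norm,
    Complex.normSq_apply, Real.norm_eq_abs, sq_abs]
  exact Finset.sum_congr rfl fun i _ => by ring

namespace Matrix

variable {n 𝕜 : Type*} [Fintype n] [DecidableEq n] [RCLike 𝕜]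

lemma IsHermitian.norm_cfc_le {A : Matrix n n 𝕜} (hA : A.IsHermitian) {f : ℝ → ℝ} {c : ℝ}
    (hc : 0 ≤ c) (hf : ∀ x ∈ spectrum ℝ A, |f x| ≤ c) : ‖cfc f A‖ ≤ c := by
  rw [hA.cfc_eq, IsHermitian.cfc, Unitary.conjStarAlgAut_apply, Matrix.mul_assoc,
    CStarRing.norm_mem_unitary_mul _ hA.eigenvectorUnitary.2,
    CStarRing.norm_mul_mem_unitary _ (Unitary.star_mem hA.eigenvectorUnitary.2),
    l2_opNorm_diagonal, pi_norm_le_iff_of_nonneg hc]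
  intro i
  simpa using hf _ (hA.eigenvalues_mem_spectrum_real i)

lemma abs_le_l2_opNorm_of_mem_spectrum {A : Matrix n n ℝ} {x : ℝ} (hx : x ∈ spectrum ℝ A) :
    |x| ≤ ‖A‖ := by
  have : Nonempty n := (isEmpty_or_nonempty n).resolve_left fun _ => by
    rwa [spectrum.of_subsingleton] at hx
  simpa using spectrum.norm_le_norm_of_mem hx

open scoped ComplexOrder in
lemma PosSemidef.nonneg_of_mem_spectrum {A : Matrix n n 𝕜} (hA : A.PosSemidef) {x : ℝ}
    (hx : x ∈ spectrum ℝ A) : 0 ≤ x := by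
  rw [hA.1.spectrum_real_eq_range_eigenvalues] at hx
  obtain ⟨i, rfl⟩ := hx
  exact hA.eigenvalues_nonneg i

theorem exists_orthogonal_norm_sub_le {X T : Matrix n n ℝ} (hT : T.PosSemidef)
    (hX : Xᵀ * X = 1 + T) : ∃ U : Matrix n n ℝ, Uᵀ * U = 1 ∧ ‖X - U‖ ≤ ‖X‖ * ‖T‖ := by
  -- picked up by the `IsSelfAdjoint T` autoparams of the `cfc` lemmas
  have hTsa : IsSelfAdjoint T := hT.1
  have hcont (f : ℝ → ℝ) : ContinuousOn f (spectrum ℝ T) := T.finite_real_spectrum.continuousOn f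
  set g : ℝ → ℝ := fun t => (√(1 + t))⁻¹
  set S := cfc g T
  have hS : Sᵀ = S := by
    rw [← conjTranspose_eq_transpose_of_trivial]; exact cfc_predicate g T
  have hSS : S * (1 + T) * S = 1 := calc
    S * (1 + T) * S = cfc (fun t => g t * (1 + t) * g t) T := by
      rw [cfc_mul _ _ T (hcont _) (hcont _), cfc_mul _ _ T (hcont _) (hcont _),
        cfc_const_add 1 (fun t => t) T (hcont _), cfc_id' ℝ T, map_one]
    _ = cfc (fun _ => (1 : ℝ)) T := cfc_congr fun t ht => by
      have ht0 := hT.nonneg_of_mem_spectrum ht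
      simp only [g]
      rw [mul_right_comm, ← sq, inv_pow, Real.sq_sqrt (by linarith), inv_mul_cancel₀ (by linarith)]
    _ = 1 := cfc_const_one ℝ T
  refine ⟨X * S, ?_, ?_⟩
  · rw [transpose_mul, hS, Matrix.mul_assoc, ← Matrix.mul_assoc Xᵀ, hX, ← Matrix.mul_assoc, hSS]
  · have : X - X * S = X * cfc (fun t => 1 - g t) T := by
      rw [cfc_sub _ _ T (hcont _) (hcont _), cfc_const_one ℝ T, Matrix.mul_sub, Matrix.mul_one]
    rw [this]
    refine (l2_opNorm_mul _ _).trans (mul_le_mul_of_nonneg_left ?_ (norm_nonneg X))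
    refine hT.1.norm_cfc_le (norm_nonneg T) fun t ht => ?_
    have h0 := hT.nonneg_of_mem_spectrum ht
    exact (abs_one_sub_inv_sqrt_one_add_le h0).trans
      (by simpa [abs_of_nonneg h0] using abs_le_l2_opNorm_of_mem_spectrum ht)

lemma det_one_add_eq_zero_of_det_eq_neg_one {R : Type*} [CommRing R] [NoZeroDivisors R]
    [CharZero R] {M : Matrix n n R} (hM : M * Mᵀ = 1) (hdet : M.det = -1) : (1 + M).det = 0 := by
  have h : 1 + M = M * (1 + M)ᵀ := by
    rw [transpose_add, transpose_one, Matrix.mul_add, Matrix.mul_one, hM, add_comm]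
  refine self_eq_neg.mp ?_
  conv_lhs => rw [h, det_mul, det_transpose, hdet, neg_one_mul]

omit [Fintype n] [DecidableEq n] in
lemma star_map_ofReal (A : Matrix n n ℝ) :
    star (A.map Complex.ofReal) = (A.map Complex.ofReal)ᵀ := by
  ext i j
  simp

lemma map_ofReal_mem_unitary {U : Matrix n n ℝ} (hU : Uᵀ * U = 1) :
    U.map Complex.ofReal ∈ unitary (Matrix n n ℂ) := by
  refine mem_unitaryGroup_iff'.mpr ?_
  rw [star_map_ofReal, ← transpose_map]
  calc Uᵀ.map Complex.ofReal * U.map Complex.ofReal = (Uᵀ * U).map Complex.ofReal :=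
        (Matrix.map_mul (f := Complex.ofRealHom)).symm
    _ = 1 := by rw [hU]; exact Matrix.map_one Complex.ofReal rfl rfl

lemma l2_opNorm_map_ofReal_le (A : Matrix n n ℝ) : ‖A.map Complex.ofReal‖ ≤ ‖A‖ := by
  set L := toEuclideanCLM (n := n) (𝕜 := ℂ) (A.map Complex.ofReal)
  set K := toEuclideanCLM (n := n) (𝕜 := ℝ) A
  rw [cstar_norm_def, cstar_norm_def A]
  refine L.opNorm_le_bound (norm_nonneg K) fun x => le_of_sq_le_sq ?_ (by positivity)
  have hre : (WithLp.toLp 2 fun i => (L x i).re) = K (WithLp.toLp 2 fun i => (x i).re) := by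
    ext i
    simp [L, K, mulVec, dotProduct, Complex.re_sum]
  have him : (WithLp.toLp 2 fun i => (L x i).im) = K (WithLp.toLp 2 fun i => (x i).im) := by
    ext i
    simp [L, K, mulVec, dotProduct, Complex.im_sum]
  rw [EuclideanSpace.norm_sq_eq_re_add_im, hre, him, mul_pow, EuclideanSpace.norm_sq_eq_re_add_im,
    mul_add]
  gcongr <;> rw [← mul_pow] <;> gcongr <;> exact K.le_opNorm _

lemma two_le_norm_one_sub_of_det_eq_neg_one {M : Matrix n n ℂ} (hM : M * Mᵀ = 1)
    (hdet : M.det = -1) : 2 ≤ ‖1 - M‖ := by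
  have : Nonempty n := (isEmpty_or_nonempty n).resolve_left fun _ => by
    norm_num [det_isEmpty] at hdet
  have h2 : (2 : ℂ) ∈ spectrum ℂ (1 - M) := by
    have h1M : (2 : Matrix n n ℂ) - (1 - M) = 1 + M := by rw [← one_add_one_eq_two]; abel
    rw [spectrum.mem_iff, isUnit_iff_isUnit_det, map_ofNat, h1M,
      det_one_add_eq_zero_of_det_eq_neg_one hM hdet]
    exact not_isUnit_zero
  simpa using spectrum.norm_le_norm_of_mem h2

end Matrix

open Matrix

lemma matRe_add_I_smul_matIm {n : ℕ} (Q : Matrix (Fin n) (Fin n) ℂ) :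
    (matRe Q).map Complex.ofReal + Complex.I • (matIm Q).map Complex.ofReal = Q := by
  ext i j
  simp [matRe, matIm, mul_comm Complex.I]

lemma matRe_mul {n : ℕ} (A B : Matrix (Fin n) (Fin n) ℂ) :
    matRe (A * B) = matRe A * matRe B - matIm A * matIm B := by
  ext i j
  simp [matRe, matIm, mul_apply, Complex.re_sum, Finset.sum_sub_distrib]

lemma matRe_one {n : ℕ} : matRe (1 : Matrix (Fin n) (Fin n) ℂ) = 1 := by
  ext i j
  by_cases h : i = j <;> simp [matRe, one_apply, h]

lemma transpose_matRe_mul_matRe {n : ℕ} {Q : Matrix (Fin n) (Fin n) ℂ} (hQ : Qᵀ * Q = 1) :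
    (matRe Q)ᵀ * matRe Q = 1 + (matIm Q)ᵀ * matIm Q := by
  have h := congrArg matRe hQ
  rw [matRe_mul, matRe_one] at h
  exact sub_eq_iff_eq_add.mp h

lemma norm_sub_map_ofReal_le {n : ℕ} (Q : Matrix (Fin n) (Fin n) ℂ)
    (U : Matrix (Fin n) (Fin n) ℝ) :
    ‖Q - U.map Complex.ofReal‖ ≤ ‖matRe Q - U‖ + ‖matIm Q‖ := by
  conv_lhs => rw [← matRe_add_I_smul_matIm Q, add_sub_right_comm,
    ← Matrix.map_sub _ Complex.ofReal_sub]
  refine (norm_add_le _ _).trans (add_le_add (l2_opNorm_map_ofReal_le _) ?_)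
  rw [norm_smul, Complex.norm_I, one_mul]
  exact l2_opNorm_map_ofReal_le _

lemma det_eq_one_of_norm_sub_lt_two {n : ℕ} {Q : Matrix (Fin n) (Fin n) ℂ}
    {U : Matrix (Fin n) (Fin n) ℝ} (hQ : Qᵀ * Q = 1) (hQdet : Q.det = 1) (hU : Uᵀ * U = 1)
    (hQU : ‖Q - U.map Complex.ofReal‖ < 2) : U.det = 1 := by
  set V := U.map Complex.ofReal
  have hV : V ∈ unitary (Matrix (Fin n) (Fin n) ℂ) := map_ofReal_mem_unitary hU
  have hUdet : U.det * U.det = 1 := by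
    simpa [det_mul, det_transpose] using congrArg det hU
  refine (mul_self_eq_one_iff.mp hUdet).resolve_right fun hneg => hQU.not_ge ?_
  have hM : Q * Vᵀ * (Q * Vᵀ)ᵀ = 1 := by
    rw [transpose_mul, transpose_transpose, Matrix.mul_assoc, ← Matrix.mul_assoc Vᵀ,
      ← star_map_ofReal, Unitary.star_mul_self_of_mem hV, Matrix.one_mul, mul_eq_one_comm.mp hQ]
  have hMdet : (Q * Vᵀ).det = -1 := by
    have hVdet : V.det = U.det := (RingHom.map_det Complex.ofRealHom U).symm
    rw [det_mul, hQdet, det_transpose, hVdet, hneg, one_mul, Complex.ofReal_neg,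
      Complex.ofReal_one]
  have h1M : 1 - Q * Vᵀ = (V - Q) * star V := by
    rw [Matrix.sub_mul, Unitary.mul_star_self_of_mem hV, star_map_ofReal]
  calc 2 ≤ ‖1 - Q * Vᵀ‖ := two_le_norm_one_sub_of_det_eq_neg_one hM hMdet
    _ = ‖Q - V‖ := by
      rw [h1M, CStarRing.norm_mul_mem_unitary _ (Unitary.star_mem hV), norm_sub_rev]

/-- For every `n ≥ 1` there are `C > 0` and `δ₀ ∈ (0,1)` such that for every
`δ ∈ (0, δ₀]` and every `Q ∈ SO(n,ℂ)` with `‖Im Q‖ < δ·‖Re Q‖` (operator norms), there exists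
`U ∈ SO(n,ℝ)` with `‖Q − U‖ ≤ C·δ`. -/
theorem stmt_15 (n : ℕ) (hn : 1 ≤ n) :
    ∃ C : ℝ, 0 < C ∧ ∃ δ₀ : ℝ, 0 < δ₀ ∧ δ₀ < 1 ∧
      ∀ δ : ℝ, 0 < δ → δ ≤ δ₀ →
        ∀ Q : Matrix (Fin n) (Fin n) ℂ, Qᵀ * Q = 1 → Q.det = 1 →
          ‖matIm Q‖ < δ * ‖matRe Q‖ →
          ∃ U : Matrix (Fin n) (Fin n) ℝ, Uᵀ * U = 1 ∧ U.det = 1 ∧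
            ‖Q - U.map Complex.ofReal‖ ≤ C * δ := by
  refine ⟨4, by norm_num, 1 / 4, by norm_num, by norm_num, fun δ hδ hδ₀ Q hQ hdet hIm => ?_⟩
  have : Nonempty (Fin n) := Fin.pos_iff_nonempty.mp hn
  set X := matRe Q
  set Y := matIm Q
  have hXY : Xᵀ * X = 1 + Yᵀ * Y := transpose_matRe_mul_matRe hQ
  have hnorm_sq (A : Matrix (Fin n) (Fin n) ℝ) : ‖Aᵀ * A‖ = ‖A‖ * ‖A‖ := by
    rw [← conjTranspose_eq_transpose_of_trivial, l2_opNorm_conjTranspose_mul_self]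
  have hX : ‖X‖ ≤ 2 := by
    have hX_sq : ‖X‖ * ‖X‖ ≤ 1 + ‖Y‖ * ‖Y‖ := by
      rw [← hnorm_sq, ← hnorm_sq, hXY, ← norm_one (α := Matrix (Fin n) (Fin n) ℝ)]
      exact norm_add_le _ _
    have hYX : ‖Y‖ ≤ ‖X‖ / 4 := by nlinarith [norm_nonneg X]
    nlinarith [norm_nonneg X, norm_nonneg Y]
  have hY : ‖Y‖ ≤ 2 * δ := by nlinarith [norm_nonneg X]
  have hT : (Yᵀ * Y).PosSemidef := by
    simpa only [conjTranspose_eq_transpose_of_trivial] using posSemidef_conjTranspose_mul_self Y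
  obtain ⟨U, hU, hXU⟩ := exists_orthogonal_norm_sub_le hT hXY
  have hQU : ‖Q - U.map Complex.ofReal‖ ≤ 4 * δ := by
    rw [hnorm_sq] at hXU
    nlinarith [norm_sub_map_ofReal_le Q U, norm_nonneg X, norm_nonneg Y]
  exact ⟨U, hU, det_eq_one_of_norm_sub_lt_two hQ hdet hU (by linarith), hQU⟩
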